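/- arXiv:2305.17737 — 2 statements merged into one kernel-verified Lean document; each statement's English description precedes it below -/
import Mathlib

section
/- Let α ∈ (π/3, 2π/3), α ≠ π/2, and β = 4π/3 − α. If p, q, r ∈ ℕ satisfy p·α + q·β + r·(π/3) = 2π and p ≠ q, then α ∈ {2π/5, 5π/12, 4π/9, 5π/9}. -/
open Real

set_option maxHeartbeats 2000000 in
theorem stmt_3 (α β : ℝ) (hα1 : π/3 < α) (hα2 : α < 2*π/3)
    (hα3 : α ≠ π/2) (hβ : β = 4*π/3 - α) (p q r : ℕ)
    (heq : (p:ℝ) * α + (q:ℝ) * β + (r:ℝ) * (π/3) = 2*π)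
    (hpq : p ≠ q) :
    α ∈ ({2*π/5, 5*π/12, 4*π/9, 5*π/9} : Set ℝ) := by
  have hπ : (0:ℝ) < π := pi_pos
  subst hβ
  have hp0 : (0:ℝ) ≤ (p:ℝ) := Nat.cast_nonneg p
  have hq0 : (0:ℝ) ≤ (q:ℝ) := Nat.cast_nonneg q
  have h1 : ((p:ℝ) + 2*q + r) * (π/3) ≤ 2*π := by
    nlinarith [mul_nonneg hp0 (by linarith : (0:ℝ) ≤ α - π/3),
      mul_nonneg hq0 (by linarith : (0:ℝ) ≤ 2*π/3 - α)]
  have h2 : 2*π ≤ ((2*p:ℝ) + 3*q + r) * (π/3) := by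
    nlinarith [mul_nonneg hp0 (by linarith : (0:ℝ) ≤ 2*π/3 - α),
      mul_nonneg hq0 (by linarith : (0:ℝ) ≤ α - π/3)]
  have hn1 : p + 2*q + r ≤ 6 := by
    have : ((p + 2*q + r : ℕ):ℝ) * (π/3) ≤ ((6:ℕ):ℝ) * (π/3) := by push_cast; linarith
    have := le_of_mul_le_mul_right (by linarith : ((p+2*q+r:ℕ):ℝ) * (π/3) ≤ ((6:ℕ):ℝ) * (π/3)) (by linarith : (0:ℝ) < π/3)
    exact_mod_cast this
  have hn2 : 6 ≤ 2*p + 3*q + r := by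
    have : ((6:ℕ):ℝ) * (π/3) ≤ ((2*p + 3*q + r : ℕ):ℝ) * (π/3) := by push_cast; linarith
    have := le_of_mul_le_mul_right this (by linarith : (0:ℝ) < π/3)
    exact_mod_cast this
  have hp6 : p ≤ 6 := by omega
  have hq3 : q ≤ 3 := by omega
  have hr6 : r ≤ 6 := by omega
  simp only [Set.mem_insert_iff, Set.mem_singleton_iff]
  interval_cases p <;> interval_cases q <;> interval_cases r <;>
    push_cast at heq <;>
    first
    | omega
    | exact Or.inl (by linarith)
    | exact Or.inr (Or.inl (by linarith))
    | exact Or.inr (Or.inr (Or.inl (by linarith)))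
    | exact Or.inr (Or.inr (Or.inr (by linarith)))
    | exact absurd (show α = π/2 by linarith) hα3
    | (exfalso; linarith)
end

section
/- Let α ∈ (π/3, 2π/3) with α/π irrational, and β = 4π/3 − α. Then the only solutions (p, q, r) ∈ ℕ³ of p·α + q·β + r·(π/3) = 2π are (0, 0, 6) and (1, 1, 2). -/
open Real

theorem stmt_9 (α β : ℝ) (hα1 : π/3 < α) (hα2 : α < 2*π/3)
    (hirr : Irrational (α / π)) (hβ : β = 4*π/3 - α) (p q r : ℕ) :
    (p:ℝ) * α + (q:ℝ) * β + (r:ℝ) * (π/3) = 2*π ↔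
      (p, q, r) = (0, 0, 6) ∨ (p, q, r) = (1, 1, 2) := by
  subst hβ
  constructor
  · intro h
    have key : 3 * ((p:ℝ) - q) * α = ((6:ℝ) - 4*q - r) * π := by ring_nf; nlinarith [h]
    have hpq : (p:ℤ) = q := by
      by_contra hne
      have h3 : ((3:ℝ) * ((p:ℝ) - q)) ≠ 0 := by
        intro h0
        apply hne
        have : (p:ℝ) = q := by linarith [mul_eq_zero.mp h0]
        exact_mod_cast this
      apply hirr
      refine ⟨((6 - 4*(q:ℚ) - r) / (3 * ((p:ℚ) - q))), ?_⟩
      have hq0 : (3:ℚ) * ((p:ℚ) - q) ≠ 0 := by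
        intro h0
        apply h3
        have := h0
        push_cast at this ⊢
        exact_mod_cast this
      push_cast
      rw [div_eq_div_iff (by push_cast at h3 ⊢; exact h3) pi_ne_zero]
      linarith [key]
    have hpq' : p = q := by exact_mod_cast hpq
    subst hpq'
    have : ((6:ℝ) - 4*p - r) * π = 0 := by rw [← key]; ring
    have h6 : (6:ℝ) - 4*p - r = 0 := by
      rcases mul_eq_zero.mp this with h | h
      · exact h
      · exact absurd h pi_ne_zero
    have h46 : 4*p + r = 6 := by
      have : ((4*p + r : ℕ):ℝ) = 6 := by push_cast; linarith
      exact_mod_cast this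
    simp only [Prod.mk.injEq]
    omega
  · rintro (h | h) <;> simp_all [Prod.ext_iff] <;> push_cast <;> ring
end
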